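/- arXiv:1807.07888 — 2 statements merged into one kernel-verified Lean document; each statement's English description precedes it below -/
import Mathlib

section
/- The ring D of formal differential operators on k((t)) is a simple ring: its only two-sided ideals are {0} and D, where k is a field of characteristic 0. -/
/-!
Every element of `D` is a finite sum `∑ fₙ ∂ⁿ`, and `[fₙ ∂ⁿ⁺¹, t] = (n + 1) fₙ ∂ⁿ`, so commutators
with `t` strictly lower the order. Hence a nonzero two-sided ideal contains a nonzero operator `P`
commuting with `t`, hence with every `tⁿ`, `n ∈ ℤ`; so `P` agrees with multiplication by `g = P 1`
on monomials. Operators in `D` lower the `t`-adic order by a bounded amount, which forces `P = g·`.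
Since `g ≠ 0` is invertible in `k((t))`, the ideal contains `1`.
-/

/-- Shortcut instance, to help typeclass resolution for endomorphisms of Laurent series. -/
instance laurentAddCommGroup (k : Type*) [Field k] : AddCommGroup (LaurentSeries k) :=
  inferInstanceAs (AddCommGroup (HahnSeries ℤ k))

/-- Multiplication by a fixed Laurent series, as a `k`-linear endomorphism of `k((t))`. -/
noncomputable def mulOp (k : Type*) [Field k] (a : LaurentSeries k) :
    Module.End k (LaurentSeries k) where
  toFun y := a * y
  map_add' := mul_add a
  map_smul' r y := by
    simp only [RingHom.id_apply, ← HahnSeries.C_mul_eq_smul]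
    ring

/-- The formal derivative `∂ = d/dt`, as a `k`-linear endomorphism of `k((t))`. -/
noncomputable def derOp (k : Type*) [Field k] : Module.End k (LaurentSeries k) :=
  LaurentSeries.derivative k (V := k)

/-- The ring `D` of formal differential operators on `F = k((t))`: the `k`-subalgebra of
`End_k(k((t)))` generated by the multiplication operators `f·` for `f ∈ F` together with the
formal derivative `∂ = d/dt`.  (This realizes the free `k`-algebra generated by `F` and the
symbol `∂`, modulo the relation `[∂, f] = f'`, acting faithfully on `F`.) -/
noncomputable def diffOps (k : Type*) [Field k] [CharZero k] :
    Subalgebra k (Module.End k (LaurentSeries k)) :=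
  Algebra.adjoin k (Set.range (mulOp k) ∪ {derOp k})

/-- The multiplication operator `f·` as an element of `D`. -/
noncomputable def mulEl (k : Type*) [Field k] [CharZero k] (f : LaurentSeries k) :
    ↥(diffOps k) :=
  ⟨mulOp k f, Algebra.subset_adjoin (Set.mem_union_left _ (Set.mem_range_self f))⟩

/-- The derivative `∂` as an element of `D`. -/
noncomputable def derEl (k : Type*) [Field k] [CharZero k] : ↥(diffOps k) :=
  ⟨derOp k, Algebra.subset_adjoin (Set.mem_union_right _ rfl)⟩

section

open HahnSeries

variable {k : Type*} [Field k]

lemma mulOp_apply (a y : LaurentSeries k) : mulOp k a y = a * y := rfl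

lemma mulOp_one : mulOp k (1 : LaurentSeries k) = 1 :=
  LinearMap.ext one_mul

lemma mulOp_mul (a b : LaurentSeries k) : mulOp k (a * b) = mulOp k a * mulOp k b :=
  LinearMap.ext fun y => mul_assoc a b y

lemma coeff_derOp (f : LaurentSeries k) (n : ℤ) :
    (derOp k f).coeff n = (n + 1) • f.coeff (n + 1) := by
  rw [derOp, LaurentSeries.derivative_apply, LaurentSeries.hasseDeriv_coeff]
  norm_num [Ring.choose_one_right]

lemma coeff_single_one_mul_derOp (f : LaurentSeries k) (n : ℤ) :
    (single 1 1 * derOp k f).coeff n = n • f.coeff n := by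
  simpa [coeff_derOp] using
    coeff_single_mul_add (r := (1 : k)) (x := derOp k f) (a := n - 1) (b := 1)

lemma support_single_one_mul_derOp (f : LaurentSeries k) :
    (single 1 1 * derOp k f).support ⊆ f.support := fun n hn h0 =>
  hn (by rw [coeff_single_one_mul_derOp, h0, smul_zero])

lemma derOp_mul (f g : LaurentSeries k) :
    derOp k (f * g) = derOp k f * g + f * derOp k g := by
  -- after multiplying by `t`, this is the Leibniz rule for the Euler operator `t ∂`, which scales
  -- the `n`-th coefficient by `n`
  refine mul_left_cancel₀ (single_ne_zero (one_ne_zero (α := k)) : single (1 : ℤ) (1 : k) ≠ 0) ?_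
  ext n
  rw [mul_add, ← mul_assoc, mul_left_comm, coeff_add, coeff_single_one_mul_derOp, coeff_mul,
    coeff_mul_left' f.isPWO_support (support_single_one_mul_derOp f),
    coeff_mul_right' g.isPWO_support (support_single_one_mul_derOp g), Finset.smul_sum,
    ← Finset.sum_add_distrib]
  refine Finset.sum_congr rfl fun ij hij => ?_
  rw [coeff_single_one_mul_derOp, coeff_single_one_mul_derOp,
    ← (Finset.mem_antidiagonal.mp hij).2.2, add_smul, smul_mul_assoc, mul_smul_comm]

lemma derOp_mul_mulOp (f : LaurentSeries k) :
    derOp k * mulOp k f = mulOp k f * derOp k + mulOp k (derOp k f) :=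
  LinearMap.ext fun y => (derOp_mul f y).trans (by rw [add_comm]; rfl)

lemma derOp_single_one : derOp k (single 1 1) = 1 := by
  ext n
  rw [coeff_derOp, coeff_single, coeff_one]
  split_ifs <;> first | omega | simp_all

lemma mulOp_pow (a : LaurentSeries k) (n : ℕ) : mulOp k (a ^ n) = mulOp k a ^ n := by
  induction n with
  | zero => rw [pow_zero, pow_zero, mulOp_one]
  | succ n ih => rw [pow_succ, pow_succ, mulOp_mul, ih]

lemma derOp_pow_succ_mul_sub_mul (n : ℕ) :
    derOp k ^ (n + 1) * mulOp k (single 1 1) - mulOp k (single 1 1) * derOp k ^ (n + 1) =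
      ((n : k) + 1) • derOp k ^ n := by
  induction n with
  | zero =>
    rw [zero_add, pow_one, pow_zero, Nat.cast_zero, zero_add, one_smul, derOp_mul_mulOp,
      derOp_single_one, mulOp_one, add_sub_cancel_left]
  | succ n ih =>
    set D := derOp k
    set T := mulOp k (single (1 : ℤ) (1 : k))
    have hDT : D * T - T * D = 1 := by
      rw [derOp_mul_mulOp, derOp_single_one, mulOp_one, add_sub_cancel_left]
    calc D ^ (n + 2) * T - T * D ^ (n + 2)
        = D * (D ^ (n + 1) * T - T * D ^ (n + 1)) + (D * T - T * D) * D ^ (n + 1) := by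
          rw [pow_succ' D (n + 1)]
          simp only [mul_sub, sub_mul, mul_assoc]
          abel
      _ = ((↑(n + 1) : k) + 1) • D ^ (n + 1) := by
          rw [ih, hDT, mul_smul_comm, ← pow_succ', one_mul, Nat.cast_succ]
          module

variable (k) in
noncomputable def orderLE (N : ℕ) : Submodule k (Module.End k (LaurentSeries k)) :=
  Submodule.span k {Q | ∃ (f : LaurentSeries k) (n : ℕ), n ≤ N ∧ Q = mulOp k f * derOp k ^ n}

lemma mulOp_mul_derOp_pow_mem_orderLE (f : LaurentSeries k) {n N : ℕ} (h : n ≤ N) :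
    mulOp k f * derOp k ^ n ∈ orderLE k N :=
  Submodule.subset_span ⟨f, n, h, rfl⟩

lemma orderLE_mono : Monotone (orderLE k) := fun _ _ h =>
  Submodule.span_mono <| by
    rintro _ ⟨f, n, hn, rfl⟩
    exact ⟨f, n, hn.trans h, rfl⟩

lemma map_mem_of_mem_orderLE
    {L : Module.End k (LaurentSeries k) →ₗ[k] Module.End k (LaurentSeries k)}
    {S : Submodule k (Module.End k (LaurentSeries k))} {N : ℕ}
    (hL : ∀ (f : LaurentSeries k) (n : ℕ), n ≤ N → L (mulOp k f * derOp k ^ n) ∈ S)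
    {Q : Module.End k (LaurentSeries k)} (hQ : Q ∈ orderLE k N) : L Q ∈ S :=
  (Submodule.span_le (p := S.comap L)).mpr (by rintro _ ⟨f, n, hn, rfl⟩; exact hL f n hn) hQ

lemma mulOp_mul_mem_orderLE (g : LaurentSeries k) {N : ℕ} {Q : Module.End k (LaurentSeries k)}
    (hQ : Q ∈ orderLE k N) : mulOp k g * Q ∈ orderLE k N :=
  map_mem_of_mem_orderLE (L := LinearMap.mulLeft k (mulOp k g)) (fun f _ hn => by
    rw [LinearMap.mulLeft_apply, ← mul_assoc, ← mulOp_mul]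
    exact mulOp_mul_derOp_pow_mem_orderLE _ hn) hQ

lemma derOp_mul_mem_orderLE {N : ℕ} {Q : Module.End k (LaurentSeries k)}
    (hQ : Q ∈ orderLE k N) : derOp k * Q ∈ orderLE k (N + 1) :=
  map_mem_of_mem_orderLE (L := LinearMap.mulLeft k (derOp k)) (fun f n hn => by
    rw [LinearMap.mulLeft_apply, ← mul_assoc, derOp_mul_mulOp, add_mul, mul_assoc, ← pow_succ']
    exact add_mem (mulOp_mul_derOp_pow_mem_orderLE _ (by omega))
      (mulOp_mul_derOp_pow_mem_orderLE _ (by omega))) hQ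

lemma derOp_pow_mul_mem_orderLE (n : ℕ) {N : ℕ} {Q : Module.End k (LaurentSeries k)}
    (hQ : Q ∈ orderLE k N) : derOp k ^ n * Q ∈ orderLE k (N + n) := by
  induction n with
  | zero => rwa [pow_zero, one_mul]
  | succ n ih => rw [pow_succ', mul_assoc]; exact derOp_mul_mem_orderLE ih

lemma mul_mem_orderLE {M N : ℕ} {P Q : Module.End k (LaurentSeries k)}
    (hP : P ∈ orderLE k M) (hQ : Q ∈ orderLE k N) : P * Q ∈ orderLE k (M + N) :=
  map_mem_of_mem_orderLE (L := LinearMap.mulRight k Q) (fun f n hn => by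
    rw [LinearMap.mulRight_apply, mul_assoc]
    exact orderLE_mono (by omega) (mulOp_mul_mem_orderLE f (derOp_pow_mul_mem_orderLE n hQ))) hP

lemma exists_mem_orderLE [CharZero k] {P : Module.End k (LaurentSeries k)} (hP : P ∈ diffOps k) :
    ∃ N, P ∈ orderLE k N := by
  induction hP using Algebra.adjoin_induction with
  | mem x hx =>
    rcases hx with ⟨f, rfl⟩ | rfl
    · refine ⟨0, ?_⟩
      rw [← mul_one (mulOp k f), ← pow_zero (derOp k)]
      exact mulOp_mul_derOp_pow_mem_orderLE f le_rfl
    · refine ⟨1, ?_⟩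
      rw [← one_mul (derOp k), ← mulOp_one, ← pow_one (derOp k)]
      exact mulOp_mul_derOp_pow_mem_orderLE 1 le_rfl
  | algebraMap r =>
    refine ⟨0, ?_⟩
    rw [Algebra.algebraMap_eq_smul_one, ← mulOp_one, ← mul_one (mulOp k 1), ← pow_zero (derOp k)]
    exact Submodule.smul_mem _ r (mulOp_mul_derOp_pow_mem_orderLE 1 le_rfl)
  | add x y _ _ hx hy =>
    obtain ⟨M, hM⟩ := hx
    obtain ⟨N, hN⟩ := hy
    exact ⟨max M N,
      add_mem (orderLE_mono (le_max_left M N) hM) (orderLE_mono (le_max_right M N) hN)⟩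
  | mul x y _ _ hx hy =>
    obtain ⟨M, hM⟩ := hx
    obtain ⟨N, hN⟩ := hy
    exact ⟨M + N, mul_mem_orderLE hM hN⟩

lemma commute_of_mem_orderLE_zero {Q : Module.End k (LaurentSeries k)} (hQ : Q ∈ orderLE k 0) :
    Commute Q (mulOp k (single 1 1)) := by
  rw [Commute, SemiconjBy, ← sub_eq_zero, ← Submodule.mem_bot k]
  refine map_mem_of_mem_orderLE (L := LinearMap.mulRight k _ - LinearMap.mulLeft k _)
    (fun f n hn => ?_) hQ
  rw [Nat.le_zero.mp hn, pow_zero, mul_one, LinearMap.sub_apply, LinearMap.mulRight_apply,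
    LinearMap.mulLeft_apply, ← mulOp_mul, ← mulOp_mul, mul_comm, sub_self]
  exact zero_mem _

lemma mul_sub_mul_mem_orderLE {N : ℕ} {Q : Module.End k (LaurentSeries k)}
    (hQ : Q ∈ orderLE k (N + 1)) :
    Q * mulOp k (single 1 1) - mulOp k (single 1 1) * Q ∈ orderLE k N := by
  refine map_mem_of_mem_orderLE (L := LinearMap.mulRight k _ - LinearMap.mulLeft k _)
    (fun f n hn => ?_) hQ
  rw [LinearMap.sub_apply, LinearMap.mulRight_apply, LinearMap.mulLeft_apply]
  rcases n with _ | n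
  · rw [pow_zero, mul_one, ← mulOp_mul, ← mulOp_mul, mul_comm, sub_self]
    exact zero_mem _
  · have hTf : mulOp k (single 1 1) * mulOp k f = mulOp k f * mulOp k (single 1 1) := by
      rw [← mulOp_mul, ← mulOp_mul, mul_comm]
    rw [← mul_assoc, hTf, mul_assoc, mul_assoc, ← mul_sub, derOp_pow_succ_mul_sub_mul,
      mul_smul_comm]
    exact Submodule.smul_mem _ _ (mulOp_mul_derOp_pow_mem_orderLE f (by omega))

variable (k) in
noncomputable def orderBounded : Subalgebra k (Module.End k (LaurentSeries k)) where
  carrier := {P | ∃ c : ℤ, ∀ (x : LaurentSeries k) (m : ℤ), (∀ j < m, x.coeff j = 0) →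
    ∀ j < m - c, (P x).coeff j = 0}
  mul_mem' := by
    rintro P Q ⟨cP, hP⟩ ⟨cQ, hQ⟩
    exact ⟨cP + cQ, fun x m hx j hj => hP (Q x) (m - cQ) (hQ x m hx) j (by omega)⟩
  add_mem' := by
    rintro P Q ⟨cP, hP⟩ ⟨cQ, hQ⟩
    refine ⟨max cP cQ, fun x m hx j hj => ?_⟩
    rw [LinearMap.add_apply, coeff_add, hP x m hx j (by omega), hQ x m hx j (by omega), add_zero]
  algebraMap_mem' r := ⟨0, fun x m hx j hj => by
    rw [Algebra.algebraMap_eq_smul_one, LinearMap.smul_apply, Module.End.one_apply, coeff_smul,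
      hx j (by omega), smul_zero]⟩

lemma mulOp_mem_orderBounded (f : LaurentSeries k) : mulOp k f ∈ orderBounded k := by
  refine ⟨-f.order, fun x m hx j hj => ?_⟩
  rcases eq_or_ne f 0 with rfl | hf
  · rw [mulOp_apply, zero_mul, coeff_zero]
  rcases eq_or_ne x 0 with rfl | hx0
  · rw [mulOp_apply, mul_zero, coeff_zero]
  have hmx : m ≤ x.order := by
    by_contra! h
    exact hx0 (coeff_order_eq_zero.mp (hx x.order h))
  exact coeff_eq_zero_of_lt_order (by rw [mulOp_apply, order_mul hf hx0]; omega)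

lemma derOp_mem_orderBounded : derOp k ∈ orderBounded k :=
  ⟨1, fun x m hx j hj => by rw [coeff_derOp, hx (j + 1) (by omega), smul_zero]⟩

lemma diffOps_le_orderBounded [CharZero k] : diffOps k ≤ orderBounded k :=
  Algebra.adjoin_le <| by
    rintro _ (⟨f, rfl⟩ | rfl)
    exacts [mulOp_mem_orderBounded f, derOp_mem_orderBounded]

lemma eq_zero_of_mem_orderBounded {Q : Module.End k (LaurentSeries k)} (hQ : Q ∈ orderBounded k)
    (h : ∀ (n : ℤ) (c : k), Q (single n c) = 0) : Q = 0 := by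
  obtain ⟨c, hc⟩ := hQ
  ext x j
  rw [LinearMap.zero_apply, coeff_zero]
  -- peel off the lowest monomials of `x` one at a time until its order exceeds `j + c`
  have key : ∀ (d : ℕ) (x : LaurentSeries k), (∀ i < j + c + 1 - d, x.coeff i = 0) →
      (Q x).coeff j = 0 := by
    intro d
    induction d with
    | zero => exact fun x hx => hc x (j + c + 1) (by simpa using hx) j (by omega)
    | succ d ih =>
      intro x hx
      set m := j + c + 1 - (d + 1 : ℕ)
      have hQx : Q x = Q (x - single m (x.coeff m)) := by rw [map_sub, h, sub_zero]
      rw [hQx]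
      refine ih _ fun i hi => ?_
      rw [coeff_sub, coeff_single]
      split_ifs with him
      · rw [him, sub_self]
      · rw [hx i (by omega), sub_zero]
  exact key (j + c + 1 - x.order).toNat x fun i hi => coeff_eq_zero_of_lt_order (by omega)

lemma commute_mulOp_inv {P : Module.End k (LaurentSeries k)} {a : LaurentSeries k}
    (hP : Commute P (mulOp k a)) : Commute P (mulOp k a⁻¹) := by
  rcases eq_or_ne a 0 with rfl | ha
  · rwa [inv_zero]
  let u : (Module.End k (LaurentSeries k))ˣ :=
    ⟨mulOp k a, mulOp k a⁻¹, by rw [← mulOp_mul, mul_inv_cancel₀ ha, mulOp_one],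
      by rw [← mulOp_mul, inv_mul_cancel₀ ha, mulOp_one]⟩
  exact hP.units_inv_right (u := u)

lemma commute_mulOp_zpow {P : Module.End k (LaurentSeries k)} {a : LaurentSeries k}
    (hP : Commute P (mulOp k a)) (n : ℤ) : Commute P (mulOp k (a ^ n)) := by
  rcases n with n | n
  · rw [Int.ofNat_eq_natCast, zpow_natCast, mulOp_pow]
    exact hP.pow_right n
  · rw [zpow_negSucc]
    exact commute_mulOp_inv (by rw [mulOp_pow]; exact hP.pow_right _)

lemma map_single_of_commute {P : Module.End k (LaurentSeries k)}
    (hP : Commute P (mulOp k (single 1 1))) (n : ℤ) (c : k) :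
    P (single n c) = single n c * P 1 := by
  have h := LinearMap.congr_fun (commute_mulOp_zpow hP n).eq 1
  rw [← RatFunc.single_zpow, Module.End.mul_apply, Module.End.mul_apply, mulOp_apply,
    mulOp_apply, mul_one] at h
  have hc : single n c = c • single n (1 : k) := by
    rw [← single_zero_mul_eq_smul, single_mul_single, zero_add, mul_one]
  rw [hc, map_smul, h, ← C_mul_eq_smul, ← C_mul_eq_smul, mul_assoc]

lemma eq_mulOp_of_commute {P : Module.End k (LaurentSeries k)} (hP : P ∈ orderBounded k)
    (hPt : Commute P (mulOp k (single 1 1))) : P = mulOp k (P 1) := by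
  rw [← sub_eq_zero]
  refine eq_zero_of_mem_orderBounded (sub_mem hP (mulOp_mem_orderBounded _)) fun n c => ?_
  rw [LinearMap.sub_apply, map_single_of_commute hPt, mulOp_apply, mul_comm, sub_self]

section Ideal

variable [CharZero k] {I : TwoSidedIdeal (diffOps k)}

lemma eq_top_of_commute {P : diffOps k} (hPI : P ∈ I) (hP0 : P ≠ 0)
    (hPt : Commute (P : Module.End k (LaurentSeries k)) (mulOp k (single 1 1))) : I = ⊤ := by
  set g := (P : Module.End k (LaurentSeries k)) 1
  have hPg : (P : Module.End k (LaurentSeries k)) = mulOp k g :=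
    eq_mulOp_of_commute (diffOps_le_orderBounded P.2) hPt
  have hg : g ≠ 0 := fun h => hP0 <| Subtype.ext <| hPg.trans <|
    LinearMap.ext fun y => by rw [h, mulOp_apply, zero_mul]; rfl
  have hinv : mulEl k g⁻¹ * P = 1 := Subtype.ext <| by
    change mulOp k g⁻¹ * (P : Module.End k (LaurentSeries k)) = 1
    rw [hPg, ← mulOp_mul, inv_mul_cancel₀ hg, mulOp_one]
  exact I.one_mem_iff.mp (hinv ▸ I.mul_mem_left _ _ hPI)

lemma eq_top_of_mem_orderLE {N : ℕ} {P : diffOps k} (hPI : P ∈ I) (hP0 : P ≠ 0)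
    (hPN : (P : Module.End k (LaurentSeries k)) ∈ orderLE k N) : I = ⊤ := by
  induction N generalizing P with
  | zero => exact eq_top_of_commute hPI hP0 (commute_of_mem_orderLE_zero hPN)
  | succ N ih =>
    set t := mulEl k (single 1 1)
    by_cases hP : P * t - t * P = 0
    · exact eq_top_of_commute hPI hP0 (sub_eq_zero.mp congr(Subtype.val $hP))
    · exact ih (I.sub_mem (I.mul_mem_right _ _ hPI) (I.mul_mem_left _ _ hPI)) hP
        (mul_sub_mul_mem_orderLE hPN)

end Ideal

end

/-- The ring `D` of formal differential operators on `k((t))` (char k = 0) is a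
simple ring: its only two-sided ideals are `{0}` and `D`. -/
theorem diffOps_simple (k : Type*) [Field k] [CharZero k]
    (I : TwoSidedIdeal ↥(diffOps k)) : I = ⊥ ∨ I = ⊤ := by
  refine or_iff_not_imp_left.mpr fun hI => ?_
  obtain ⟨P, hPI, hP0⟩ : ∃ P ∈ I, P ≠ 0 := by
    by_contra! h
    exact hI (eq_bot_iff.mpr fun P hP => (TwoSidedIdeal.mem_bot _).mpr (h P hP))
  obtain ⟨N, hN⟩ := exists_mem_orderLE P.2
  exact eq_top_of_mem_orderLE hPI hP0 hN
end

section
/- (Cyclic Vector Lemma) Let (E, ∇) be a flat connection on F = k((t)) with k of characteristic 0, i.e., E is a finite-dimensional F-vector space with a D-module structure where D is the ring of differential operators on F. Then E admits a cyclic vector: there exists s ∈ E with D·s = E. -/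
/-!
Katz's explicit cyclic vector. Fix a basis `e₀, …, e_{n-1}` and `t` with `t′ = 1`. Adjoin a new
constant `λ` and put `τ = t - λ`, so that `τ′ = 1`. Starting from `v_{p,0} = e_p`, the vectors
`v_{p,j+1} = (v_{p+1,j} - ∇ v_{p,j}) / (j + 1)` make `∇ (∑_{j<m} τ^j v_{p,j})` equal to
`∑_{j<m-1} τ^j v_{p+1,j}` modulo `τ^(m-1)`. Hence `s(λ) = ∑_{j<n} τ^j v_{0,j}` satisfies
`∇^p s(λ) ≡ e_p mod τ` for `p < n`, so the determinant of `s, ∇s, …, ∇^{n-1}s` is a polynomial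
in `λ` taking the value `1` at `λ = t`. It is therefore nonzero at some natural number `λ = m`,
which is a constant, and `s(m)` is a cyclic vector.
-/

open Polynomial Finset
open scoped Differential Matrix

def IsConnection (R : Type*) {M : Type*} [CommRing R] [Differential R] [AddCommGroup M]
    [Module R M] (D : M →+ M) : Prop :=
  ∀ (r : R) (x : M), D (r • x) = r′ • x + r • D x

section Katz

variable {R M : Type*} [CommRing R] [Differential R] [AddCommGroup M] [Module R M]
  {D : M →+ M} {τ : R}

lemma deriv_pow_succ_of_deriv_eq_one (hτ : τ′ = 1) (m : ℕ) :
    (τ ^ (m + 1))′ = (m + 1) • τ ^ m := by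
  rw [Derivation.leibniz_pow, hτ, smul_eq_mul, mul_one, Nat.add_sub_cancel]

lemma IsConnection.apply_pow_succ_smul (hD : IsConnection R D) (hτ : τ′ = 1) (m : ℕ) (x : M) :
    D (τ ^ (m + 1) • x) = τ ^ m • ((m + 1) • x + τ • D x) := by
  rw [hD, deriv_pow_succ_of_deriv_eq_one hτ, smul_add, pow_succ, mul_smul, smul_assoc, smul_comm]

def katzSum (τ : R) (v : ℕ → ℕ → M) (p m : ℕ) : M :=
  ∑ j ∈ range m, τ ^ j • v p j

variable {v : ℕ → ℕ → M}

lemma IsConnection.apply_katzSum_succ (hD : IsConnection R D) (hτ : τ′ = 1)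
    (hv : ∀ p j, (j + 1) • v p (j + 1) + D (v p j) = v (p + 1) j) (p m : ℕ) :
    D (katzSum τ v p (m + 1)) = katzSum τ v (p + 1) m + τ ^ m • D (v p m) := by
  have hshift : ∑ j ∈ range m, τ ^ j • τ • D (v p (j + 1)) + D (v p 0)
      = ∑ j ∈ range m, τ ^ j • D (v p j) + τ ^ m • D (v p m) := by
    rw [← sum_range_succ (fun j => τ ^ j • D (v p j)), sum_range_succ']
    simp only [pow_succ, mul_smul, pow_zero, one_smul]
  rw [katzSum, katzSum, map_sum, sum_range_succ']
  simp only [hD.apply_pow_succ_smul hτ, pow_zero, one_smul, ← hv, smul_add, sum_add_distrib]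
  rw [add_assoc, hshift, add_assoc]

lemma IsConnection.exists_iterate_katzSum_eq (hD : IsConnection R D) (hτ : τ′ = 1)
    (hv : ∀ p j, (j + 1) • v p (j + 1) + D (v p j) = v (p + 1) j) {m p : ℕ} (hp : p ≤ m) :
    ∃ y, D^[p] (katzSum τ v 0 m) = katzSum τ v p (m - p) + τ ^ (m - p) • y := by
  induction p with
  | zero => exact ⟨0, by simp⟩
  | succ p ih =>
    obtain ⟨y, hy⟩ := ih (by omega)
    obtain ⟨k, hk⟩ : ∃ k, m - p = k + 1 := ⟨m - p - 1, by omega⟩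
    refine ⟨D (v p k) + ((k + 1) • y + τ • D y), ?_⟩
    rw [Function.iterate_succ_apply', hy, hk, map_add, hD.apply_katzSum_succ hτ hv,
      hD.apply_pow_succ_smul hτ, show m - (p + 1) = k by omega, add_assoc, ← smul_add]

lemma IsConnection.exists_iterate_katzSum_eq_add_smul (hD : IsConnection R D) (hτ : τ′ = 1)
    (hv : ∀ p j, (j + 1) • v p (j + 1) + D (v p j) = v (p + 1) j) {m p : ℕ} (hp : p < m) :
    ∃ y, D^[p] (katzSum τ v 0 m) = v p 0 + τ • y := by
  obtain ⟨y, hy⟩ := hD.exists_iterate_katzSum_eq hτ hv hp.le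
  obtain ⟨k, hk⟩ : ∃ k, m - p = k + 1 := ⟨m - p - 1, by omega⟩
  refine ⟨∑ j ∈ range k, τ ^ j • v p (j + 1) + τ ^ k • y, ?_⟩
  rw [hy, hk, katzSum, sum_range_succ']
  simp only [pow_succ', mul_smul, ← smul_sum, smul_add, pow_zero, one_smul]
  abel

end Katz

section KatzFamily

variable {M : Type*} [AddCommGroup M] [Module ℚ M]

def katzFamily (D : M → M) (e : ℕ → M) : ℕ → ℕ → M
  | p, 0 => e p
  | p, j + 1 => (j + 1 : ℚ)⁻¹ • (katzFamily D e (p + 1) j - D (katzFamily D e p j))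

lemma katzFamily_succ (D : M → M) (e : ℕ → M) (p j : ℕ) :
    (j + 1) • katzFamily D e p (j + 1) + D (katzFamily D e p j) = katzFamily D e (p + 1) j := by
  rw [katzFamily, ← Nat.cast_smul_eq_nsmul ℚ, smul_smul, Nat.cast_succ,
    mul_inv_cancel₀ (by positivity), one_smul, sub_add_cancel]

end KatzFamily

section MatrixConnection

variable {R : Type*} [CommRing R] [Differential R] {ι : Type*} [Fintype ι]

def matrixConnection (A : Matrix ι ι R) : (ι → R) →+ (ι → R) where
  toFun u := (fun i => (u i)′) + A *ᵥ u
  map_zero' := by ext; simp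
  map_add' u w := by ext; simp only [Pi.add_apply, map_add, Matrix.mulVec_add]; abel

lemma matrixConnection_apply (A : Matrix ι ι R) (u : ι → R) :
    matrixConnection A u = (fun i => (u i)′) + A *ᵥ u := rfl

lemma isConnection_matrixConnection (A : Matrix ι ι R) :
    IsConnection R (matrixConnection A) := by
  intro r u
  ext i
  simp only [matrixConnection_apply, Pi.add_apply, Pi.smul_apply, smul_eq_mul,
    Derivation.leibniz, Matrix.mulVec_smul]
  ring

lemma matrixConnection_single_one [DecidableEq ι] (A : Matrix ι ι R) (j : ι) :
    matrixConnection A (Pi.single j 1) = A.col j := by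
  ext i
  rw [matrixConnection_apply, Pi.add_apply, Matrix.mulVec_single_one]
  rcases eq_or_ne i j with rfl | hij <;> simp [*]

lemma semiconj_matrixConnection {S : Type*} [CommRing S] [Differential S] (φ : R →+* S)
    (hφ : ∀ r, φ r′ = (φ r)′) {A : Matrix ι ι R} {B : Matrix ι ι S} (hAB : A.map φ = B) :
    Function.Semiconj (φ ∘ ·) (matrixConnection A) (matrixConnection B) := by
  intro u
  ext i
  simp only [Function.comp_apply, matrixConnection_apply, Pi.add_apply, map_add, hφ,
    RingHom.map_mulVec, hAB]

end MatrixConnection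

lemma Polynomial.eval_mapCoeffs {K : Type*} [CommRing K] [Differential K] {c : K}
    (hc : c′ = 0) (p : K[X]) : eval c (Differential.mapCoeffs p) = (eval c p)′ := by
  simpa [hc] using (Differential.deriv_aeval_eq c p).symm

lemma Polynomial.exists_natCast_not_isRoot {K : Type*} [CommRing K] [IsDomain K] [CharZero K]
    {p : K[X]} (hp : p ≠ 0) : ∃ m : ℕ, ¬ p.IsRoot m := by
  by_contra! h
  refine hp (eq_zero_of_infinite_isRoot p ?_)
  exact (Set.infinite_range_of_injective Nat.cast_injective).mono (Set.range_subset_iff.mpr h)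

theorem exists_cyclic_vector_matrixConnection {K : Type*} [Field K] [CharZero K]
    [Differential K] {t : K} (ht : t′ = 1) {n : ℕ} (A : Matrix (Fin n) (Fin n) K) :
    ∃ z : Fin n → K,
      Submodule.span K (Set.range fun p : Fin n => (matrixConnection A)^[p] z) = ⊤ := by
  let _ : Differential K[X] := ⟨Differential.mapCoeffs⟩
  let Dₓ := matrixConnection (A.map C)
  let τ : K[X] := C t - X
  have hτ : τ′ = 1 := by
    change Differential.mapCoeffs (C t - X) = 1
    simp [ht]
  let e : ℕ → Fin n → K[X] := fun p i => if (i : ℕ) = p then 1 else 0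
  let s := katzSum τ (katzFamily Dₓ e) 0 n
  let W : Matrix (Fin n) (Fin n) K[X] := Matrix.of fun i p => (Dₓ^[p] s) i
  have hW_eval_t : W.map (eval t) = 1 := by
    ext i p
    obtain ⟨y, hy⟩ : ∃ y, Dₓ^[p] s = e p + τ • y :=
      (isConnection_matrixConnection _).exists_iterate_katzSum_eq_add_smul hτ
        (katzFamily_succ Dₓ e) p.isLt
    simp [W, hy, τ, e, Matrix.one_apply, Fin.ext_iff, apply_ite (eval t)]
  have heval_det (c : K) : eval c W.det = (W.map (eval c)).det := by
    simpa using RingHom.map_det (evalRingHom c) W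
  have hdet : W.det ≠ 0 := fun h => by simpa [h, hW_eval_t] using heval_det t
  obtain ⟨m, hm⟩ := exists_natCast_not_isRoot hdet
  have hsemi : Function.Semiconj (evalRingHom (m : K) ∘ ·) Dₓ (matrixConnection A) :=
    semiconj_matrixConnection _ (eval_mapCoeffs (Derivation.map_natCast _ m)) (by ext; simp)
  refine ⟨evalRingHom (m : K) ∘ s, ?_⟩
  have hcols : (fun p : Fin n => (matrixConnection A)^[p] (evalRingHom (m : K) ∘ s))
      = (W.map (eval (m : K))).col := by
    ext p i
    rw [← hsemi.iterate_right p s]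
    rfl
  rw [hcols]
  refine (Matrix.linearIndependent_cols_iff_isUnit.mpr ?_).span_eq_top_of_card_eq_finrank'
    (by simp)
  rwa [Matrix.isUnit_iff_isUnit_det, isUnit_iff_ne_zero, ← heval_det]

lemma IsConnection.semiconj_of_basis {R E F ι : Type*} [CommRing R] [Differential R]
    [AddCommGroup E] [Module R E] [AddCommGroup F] [Module R F] (b : Module.Basis ι R E)
    {D : E →+ E} {D' : F →+ F} (hD : IsConnection R D) (hD' : IsConnection R D')
    (Φ : E →ₗ[R] F) (h : ∀ i, Φ (D (b i)) = D' (Φ (b i))) : Function.Semiconj Φ D D' := by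
  let L : E →ₗ[R] F :=
    { toFun x := Φ (D x) - D' (Φ x)
      map_add' x y := by simp only [map_add]; abel
      map_smul' r x := by
        simp only [hD r x, hD' r (Φ x), map_add, map_smul, smul_sub]
        abel }
  have hL : L = 0 := b.ext fun i => sub_eq_zero.mpr (h i)
  exact fun x => sub_eq_zero.mp (LinearMap.congr_fun hL x)

theorem IsConnection.exists_cyclic_vector {K E : Type*} [Field K] [CharZero K]
    [Differential K] {t : K} (ht : t′ = 1) [AddCommGroup E] [Module K E] [FiniteDimensional K E]
    {D : E →+ E} (hD : IsConnection K D) :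
    ∃ s : E, Submodule.span K (Set.range fun i : ℕ => D^[i] s) = ⊤ := by
  let b := Module.finBasis K E
  let A : Matrix _ _ K := Matrix.of fun i j => b.repr (D (b j)) i
  have hΦ : Function.Semiconj b.equivFun D (matrixConnection A) :=
    hD.semiconj_of_basis b (isConnection_matrixConnection A) b.equivFun.toLinearMap fun j => by
      have hbj : b.equivFun (b j) = Pi.single j 1 := by
        rw [← Basis.equivFun_symm_single b, LinearEquiv.apply_symm_apply]
      rw [LinearEquiv.coe_coe, hbj, matrixConnection_single_one]
      rfl
  obtain ⟨z, hz⟩ := exists_cyclic_vector_matrixConnection ht A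
  have hiter (p : ℕ) :
      D^[p] (b.equivFun.symm z) = b.equivFun.symm ((matrixConnection A)^[p] z) := by
    rw [LinearEquiv.eq_symm_apply, ← b.equivFun.apply_symm_apply z, b.equivFun.symm_apply_apply]
    exact hΦ.iterate_right p _
  refine ⟨b.equivFun.symm z, top_unique ?_⟩
  calc ⊤ = (Submodule.span K (Set.range fun p : Fin _ => (matrixConnection A)^[p] z)).map
        b.equivFun.symm.toLinearMap := by rw [hz, Submodule.map_top, LinearEquiv.range]
    _ = Submodule.span K (Set.range fun p : Fin _ => D^[p] (b.equivFun.symm z)) := by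
        simp only [Submodule.map_span, ← Set.range_comp, hiter]
        rfl
    _ ≤ _ := Submodule.span_mono (Set.range_comp_subset_range Fin.val fun i => D^[i] _)

namespace LaurentSeries

open HahnSeries

variable {R : Type*} [CommRing R]

lemma coeff_derivative (f : R⸨X⸩) (n : ℤ) :
    (derivative R f).coeff n = (n + 1) • f.coeff (n + 1) := by
  rw [derivative_apply, hasseDeriv_coeff, Nat.cast_one, Ring.choose_one_right]

lemma derivative_single (a : ℤ) (r : R) :
    derivative R (single a r) = single (a - 1) (a • r) := by
  rw [derivative_apply, hasseDeriv_single, Nat.cast_one, Ring.choose_one_right]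

lemma derivative_single_mul (a : ℤ) (r : R) (x : R⸨X⸩) :
    derivative R (single a r * x) =
      derivative R (single a r) * x + single a r * derivative R x := by
  ext n
  have hshift (b : ℤ) (s : R) (y : R⸨X⸩) (m : ℤ) :
      (single b s * y).coeff m = s * y.coeff (m - b) := by
    rw [← coeff_single_mul_add (b := b), sub_add_cancel]
  rw [HahnSeries.coeff_add, derivative_single, coeff_derivative, hshift, hshift, hshift,
    coeff_derivative, show n + 1 - a = n - (a - 1) by ring, show n - a + 1 = n - (a - 1) by ring]
  simp only [zsmul_eq_mul, Int.cast_sub, Int.cast_add, Int.cast_one]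
  ring

lemma derivative_coe (F : PowerSeries R) :
    derivative R (F : R⸨X⸩) = (PowerSeries.derivative R F : R⸨X⸩) := by
  ext n
  rw [coeff_derivative, PowerSeries.coeff_coe, PowerSeries.coeff_coe]
  rcases lt_trichotomy n (-1) with hn | rfl | hn
  · simp [show n < 0 by omega, show n + 1 < 0 by omega]
  · simp
  · obtain ⟨m, rfl⟩ := Int.eq_ofNat_of_zero_le (show 0 ≤ n by omega)
    simp [show ¬ (m : ℤ) < 0 by omega, show ¬ (m : ℤ) + 1 < 0 by omega,
      PowerSeries.coeff_derivative, Int.natAbs_add_of_nonneg]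
    ring

theorem derivative_mul (f g : R⸨X⸩) :
    derivative R (f * g) = derivative R f * g + f * derivative R g := by
  let Leibniz (x y : R⸨X⸩) : Prop :=
    derivative R (x * y) = derivative R x * y + x * derivative R y
  have symm {x y} (h : Leibniz x y) : Leibniz y x := by
    simp only [Leibniz, mul_comm y x, h]; ring
  have single_mul (a : ℤ) {x y} (h : Leibniz x y) : Leibniz (single a 1 * x) y := by
    simp only [Leibniz, mul_assoc, derivative_single_mul, h]; ring
  have coe (F G : PowerSeries R) : Leibniz F G := by
    simp only [Leibniz, ← PowerSeries.coe_mul, derivative_coe, Derivation.leibniz, smul_eq_mul]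
    simp only [map_add, PowerSeries.coe_mul]
    ring
  rw [← f.single_order_mul_powerSeriesPart, ← g.single_order_mul_powerSeriesPart]
  exact single_mul _ (symm (single_mul _ (symm (coe _ _))))

noncomputable instance : Differential R⸨X⸩ :=
  -- `Differential` expects the `ℤ`-algebra `Ring.toIntAlgebra`, which is not definitionally the
  -- one instance search finds on `R⸨X⸩`.
  letI : Algebra ℤ R⸨X⸩ := Ring.toIntAlgebra _
  ⟨Derivation.mk' (derivative R).toAddMonoidHom.toIntLinearMap fun f g => by
    simp only [AddMonoidHom.coe_toIntLinearMap, LinearMap.toAddMonoidHom_coe, derivative_mul,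
      smul_eq_mul]
    ring⟩

lemma deriv_eq_derivative (f : R⸨X⸩) : f′ = derivative R f := rfl

lemma deriv_single_one : (single 1 (1 : R) : R⸨X⸩)′ = 1 := by
  rw [deriv_eq_derivative, derivative_single, sub_self, one_smul, ← C_apply, C_one]

end LaurentSeries

/-- Cyclic Vector Lemma: Let `(E, ∇)` be a flat connection on `F = k((t))`
(char k = 0): `E` is a finite-dimensional `F`-vector space and `∇ : E → E` is `k`-linear and
satisfies the Leibniz rule, making `E` a module over the ring `D` of differential operators.
Then `E` admits a cyclic vector `s`: the `D`-submodule generated by `s`, i.e. the `F`-span of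
the iterates `∇^i s`, is all of `E`. -/
theorem exists_cyclic_vector
    (k : Type*) [Field k] [CharZero k]
    (E : Type*) [AddCommGroup E] [Module (LaurentSeries k) E]
    [FiniteDimensional (LaurentSeries k) E]
    [Module k E] [IsScalarTower k (LaurentSeries k) E]
    (D : E →ₗ[k] E)
    (leibniz : ∀ (f : LaurentSeries k) (e : E),
      D (f • e) = LaurentSeries.derivative k f • e + f • D e) :
    ∃ s : E, Submodule.span (LaurentSeries k) (Set.range fun i : ℕ => (⇑D)^[i] s) = ⊤ := by
  have : CharZero (LaurentSeries k) :=
    charZero_of_injective_algebraMap (algebraMap k (LaurentSeries k)).injective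
  exact IsConnection.exists_cyclic_vector LaurentSeries.deriv_single_one
    (D := D.toAddMonoidHom) leibniz
end
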